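/- arXiv:0710.0870 — 5 statements merged into one kernel-verified Lean document; each statement's English description precedes it below -/
import Mathlib

section
/- Let a_1, ..., a_m be nonzero vectors in ℝⁿ and c_1, ..., c_m ≥ 0. Suppose there exists a finite D such that ∑_j c_j S(a_j · X) ≤ S(X) + D for every random vector X in ℝⁿ with finite entropy. Then ∑_{j=1}^m c_j = n. -/
/-!
For `l > 0`, `l • X` has density `smulDensity l f` when `X` has density `f`, and the change of
variables gives `S(l • X) = S(X) - n log l` and `S(⟪a, l • X⟫) = S(⟪a, X⟫) - log l`. Applying the
hypothesis to `l • X` for a standard Gaussian `X`, whose marginals `⟪a, X⟫` are centred Gaussians of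
variance `‖a‖²`, gives `(n - ∑ c_j) log l ≤ C` for every `l > 0`, hence `∑ c_j = n`.
-/

open MeasureTheory Real ProbabilityTheory Module
open scoped RealInnerProductSpace

section Scaling

variable {F : Type*} [NormedAddCommGroup F] [NormedSpace ℝ F] {l : ℝ}

noncomputable def smulDensity (l : ℝ) (f : F → ℝ) (x : F) : ℝ :=
  l⁻¹ ^ finrank ℝ F * f (l⁻¹ • x)

lemma mul_log_smulDensity {f : F → ℝ} (hf : ∀ x, 0 ≤ f x) (hl : 0 < l) (x : F) :
    smulDensity l f x * log (smulDensity l f x) =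
      smulDensity l (fun y => f y * log (f y) - finrank ℝ F * log l * f y) x := by
  have hc : 0 < l⁻¹ ^ finrank ℝ F := by positivity
  simp only [smulDensity]
  rcases (hf (l⁻¹ • x)).eq_or_lt with h | h
  · simp [← h]
  · rw [log_mul hc.ne' h.ne', log_pow, log_inv]
    ring

variable [MeasurableSpace F] [BorelSpace F]

lemma Measurable.smulDensity {f : F → ℝ} (hf : Measurable f) : Measurable (smulDensity l f) :=
  (hf.comp (measurable_const_smul _)).const_mul _

variable [FiniteDimensional ℝ F] {μ : Measure F} [μ.IsAddHaarMeasure]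

lemma MeasureTheory.Integrable.smulDensity {f : F → ℝ} (hf : Integrable f μ) (hl : 0 < l) :
    Integrable (smulDensity l f) μ :=
  (hf.comp_smul (inv_ne_zero hl.ne')).const_mul _

lemma integral_mul_smulDensity (hl : 0 < l) (f g : F → ℝ) :
    ∫ x, g x * smulDensity l f x ∂μ = ∫ x, g (l • x) * f x ∂μ := by
  have hpt (x : F) :
      g x * smulDensity l f x = l⁻¹ ^ finrank ℝ F * (g (l • l⁻¹ • x) * f (l⁻¹ • x)) := by
    rw [smul_inv_smul₀ hl.ne', smulDensity]
    ring
  simp_rw [hpt]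
  rw [integral_const_mul, Measure.integral_comp_smul μ (fun y => g (l • y) * f y), inv_pow, inv_inv,
    abs_of_pos (by positivity), smul_eq_mul, inv_mul_cancel_left₀ (by positivity)]

lemma integral_smulDensity (hl : 0 < l) (f : F → ℝ) :
    ∫ x, smulDensity l f x ∂μ = ∫ x, f x ∂μ := by
  simpa using integral_mul_smulDensity (μ := μ) hl f 1

end Scaling

section Entropy

variable {F : Type*} [MeasurableSpace F]

/-- The paper's `S`, with its sign convention `∫ f log f`. -/
noncomputable def entropy (μ : Measure F) (f : F → ℝ) : ℝ := ∫ x, f x * log (f x) ∂μ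

structure IsFiniteEntropyDensity (μ : Measure F) (f : F → ℝ) : Prop where
  measurable : Measurable f
  nonneg : ∀ x, 0 ≤ f x
  integral_eq_one : ∫ x, f x ∂μ = 1
  integrable : Integrable f μ
  integrable_mul_log : Integrable (fun x => f x * log (f x)) μ

variable [NormedAddCommGroup F] [NormedSpace ℝ F] [BorelSpace F] [FiniteDimensional ℝ F]
  {μ : Measure F} [μ.IsAddHaarMeasure] {f : F → ℝ} {l : ℝ}

lemma IsFiniteEntropyDensity.smulDensity (hf : IsFiniteEntropyDensity μ f) (hl : 0 < l) :
    IsFiniteEntropyDensity μ (_root_.smulDensity l f) where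
  measurable := hf.measurable.smulDensity
  nonneg x := mul_nonneg (by positivity) (hf.nonneg _)
  integral_eq_one := by rw [integral_smulDensity hl, hf.integral_eq_one]
  integrable := hf.integrable.smulDensity hl
  integrable_mul_log := by
    simp_rw [mul_log_smulDensity hf.nonneg hl]
    exact (hf.integrable_mul_log.sub (hf.integrable.const_mul _)).smulDensity hl

lemma IsFiniteEntropyDensity.entropy_smulDensity (hf : IsFiniteEntropyDensity μ f) (hl : 0 < l) :
    entropy μ (_root_.smulDensity l f) = entropy μ f - finrank ℝ F * log l := by
  simp_rw [entropy, mul_log_smulDensity hf.nonneg hl]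
  rw [integral_smulDensity hl, integral_sub hf.integrable_mul_log (hf.integrable.const_mul _),
    integral_const_mul, hf.integral_eq_one, mul_one]

end Entropy

section Gaussian

variable (E : Type*) [NormedAddCommGroup E] [InnerProductSpace ℝ E] [FiniteDimensional ℝ E]
  [MeasurableSpace E] [BorelSpace E]

noncomputable def stdGaussianPDFReal (x : E) : ℝ :=
  rexp (-‖x‖ ^ 2 / 2) / ∫ y : E, rexp (-‖y‖ ^ 2 / 2)

lemma integral_exp_neg_sq_norm_div_two_pos : 0 < ∫ x : E, rexp (-‖x‖ ^ 2 / 2) := by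
  have h := GaussianFourier.integral_rexp_neg_mul_sq_norm (V := E) (b := 1 / 2) (by norm_num)
  simp only [neg_mul, one_div_mul_eq_div, neg_div] at h ⊢
  rw [h]
  positivity

lemma integrable_exp_neg_sq_norm_div_two : Integrable (fun x : E => rexp (-‖x‖ ^ 2 / 2)) :=
  .of_integral_ne_zero (integral_exp_neg_sq_norm_div_two_pos E).ne'

variable {E}

lemma stdGaussianPDFReal_nonneg (x : E) : 0 ≤ stdGaussianPDFReal E x := by
  unfold stdGaussianPDFReal
  have := integral_exp_neg_sq_norm_div_two_pos E
  positivity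

lemma integrable_stdGaussianPDFReal : Integrable (stdGaussianPDFReal E) :=
  (integrable_exp_neg_sq_norm_div_two E).div_const _

@[fun_prop]
lemma measurable_stdGaussianPDFReal : Measurable (stdGaussianPDFReal E) := by
  unfold stdGaussianPDFReal; fun_prop

lemma integral_cexp_neg_sq_norm_div_two_add (t : E) :
    ∫ x : E, Complex.exp (-‖x‖ ^ 2 / 2 + ⟪x, t⟫ * Complex.I) =
      (∫ x : E, rexp (-‖x‖ ^ 2 / 2)) * Complex.exp (-‖t‖ ^ 2 / 2) := by
  have hb : 0 < (1 / 2 : ℂ).re := by norm_num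
  have h := GaussianFourier.integral_cexp_neg_mul_sq_norm_add hb Complex.I t
  have h0 := GaussianFourier.integral_cexp_neg_mul_sq_norm hb (V := E)
  calc ∫ x : E, Complex.exp (-‖x‖ ^ 2 / 2 + ⟪x, t⟫ * Complex.I)
      = ∫ x : E, Complex.exp (-(1 / 2) * ‖x‖ ^ 2 + Complex.I * ⟪t, x⟫) := by
        congr 1 with x
        rw [real_inner_comm]
        congr 1
        ring
    _ = (∫ x : E, Complex.exp (-(1 / 2) * ‖x‖ ^ 2)) * Complex.exp (-‖t‖ ^ 2 / 2) := by
        rw [h, h0, Complex.I_sq]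
        ring_nf
    _ = _ := by
        rw [← integral_complex_ofReal]
        push_cast
        ring_nf

lemma withDensity_stdGaussianPDFReal :
    volume.withDensity (fun x => ENNReal.ofReal (stdGaussianPDFReal E x)) = stdGaussian E := by
  have : IsFiniteMeasure (volume.withDensity (fun x => ENNReal.ofReal (stdGaussianPDFReal E x))) :=
    isFiniteMeasure_withDensity_ofReal integrable_stdGaussianPDFReal.2
  refine Measure.ext_of_charFun (funext fun t => ?_)
  rw [charFun_stdGaussian, charFun_apply,
    integral_withDensity_eq_integral_toReal_smul (by fun_prop) (by simp)]
  have hZ : ((∫ x : E, rexp (-‖x‖ ^ 2 / 2) : ℝ) : ℂ) ≠ 0 :=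
    Complex.ofReal_ne_zero.2 (integral_exp_neg_sq_norm_div_two_pos E).ne'
  have hpt (x : E) :
      (ENNReal.ofReal (stdGaussianPDFReal E x)).toReal • Complex.exp (⟪x, t⟫ * Complex.I) =
        ((∫ x : E, rexp (-‖x‖ ^ 2 / 2) : ℝ) : ℂ)⁻¹ *
          Complex.exp (-‖x‖ ^ 2 / 2 + ⟪x, t⟫ * Complex.I) := by
    rw [ENNReal.toReal_ofReal (stdGaussianPDFReal_nonneg _), stdGaussianPDFReal, Complex.real_smul,
      Complex.exp_add]
    push_cast
    ring
  simp_rw [hpt]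
  rw [integral_const_mul, integral_cexp_neg_sq_norm_div_two_add, inv_mul_cancel_left₀ hZ]

lemma integral_mul_stdGaussianPDFReal (g : E → ℝ) :
    ∫ x, g x * stdGaussianPDFReal E x = ∫ x, g x ∂stdGaussian E := by
  rw [← withDensity_stdGaussianPDFReal,
    integral_withDensity_eq_integral_toReal_smul (by fun_prop) (by simp)]
  simp_rw [ENNReal.toReal_ofReal (stdGaussianPDFReal_nonneg _), smul_eq_mul, mul_comm]

lemma map_strongDual_stdGaussian (L : StrongDual ℝ E) :
    (stdGaussian E).map L = gaussianReal 0 (‖L‖₊ ^ 2) := by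
  rw [IsGaussian.map_eq_gaussianReal, integral_strongDual_stdGaussian, variance_dual_stdGaussian]
  congr
  ext
  simp

lemma integral_comp_inner_mul_stdGaussianPDFReal (a : E) {φ : ℝ → ℝ} (hφ : Measurable φ) :
    ∫ x, φ ⟪a, x⟫ * stdGaussianPDFReal E x = ∫ t, φ (‖a‖ * t) * stdGaussianPDFReal ℝ t := by
  have hE : ‖innerSL ℝ a‖₊ = ‖a‖₊ := NNReal.eq (innerSL_apply_norm ℝ a)
  have hℝ : ‖‖a‖ • ContinuousLinearMap.id ℝ ℝ‖₊ = ‖a‖₊ := by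
    ext
    rw [coe_nnnorm, norm_smul, ContinuousLinearMap.norm_id, mul_one, norm_norm, coe_nnnorm]
  rw [integral_mul_stdGaussianPDFReal, integral_mul_stdGaussianPDFReal]
  calc ∫ x, φ ⟪a, x⟫ ∂stdGaussian E
      = ∫ t, φ t ∂(stdGaussian E).map (innerSL ℝ a) :=
        (integral_map (by fun_prop) hφ.aestronglyMeasurable).symm
    _ = ∫ t, φ t ∂(stdGaussian ℝ).map (‖a‖ • ContinuousLinearMap.id ℝ ℝ) := by
        rw [map_strongDual_stdGaussian, map_strongDual_stdGaussian, hE, hℝ]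
    _ = ∫ t, φ (‖a‖ * t) ∂stdGaussian ℝ := integral_map (by fun_prop) hφ.aestronglyMeasurable

lemma isFiniteEntropyDensity_stdGaussianPDFReal :
    IsFiniteEntropyDensity volume (stdGaussianPDFReal E) where
  measurable := measurable_stdGaussianPDFReal
  nonneg := stdGaussianPDFReal_nonneg
  integral_eq_one := by
    simpa using integral_mul_stdGaussianPDFReal (E := E) 1
  integrable := integrable_stdGaussianPDFReal
  integrable_mul_log := by
    have hsq : Integrable (fun x => ‖x‖ ^ 2 * stdGaussianPDFReal E x) := by
      have h := (IsGaussian.memLp_two_id (μ := stdGaussian E)).integrable_norm_pow two_ne_zero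
      rw [← withDensity_stdGaussianPDFReal,
        integrable_withDensity_iff_integrable_smul' (by fun_prop) (by simp)] at h
      simpa only [ENNReal.toReal_ofReal (stdGaussianPDFReal_nonneg _), smul_eq_mul, id, mul_comm]
        using h
    -- `log ∘ stdGaussianPDFReal` is `-‖x‖² / 2` up to an additive constant
    refine ((hsq.const_mul (-1 / 2)).sub (integrable_stdGaussianPDFReal.const_mul
      (log (∫ x : E, rexp (-‖x‖ ^ 2 / 2))))).congr (ae_of_all _ fun x => ?_)
    simp only [Pi.sub_apply, stdGaussianPDFReal]
    rw [log_div (exp_pos _).ne' (integral_exp_neg_sq_norm_div_two_pos E).ne', log_exp]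
    ring

end Gaussian

section Marginal

variable {E : Type*} [NormedAddCommGroup E] [InnerProductSpace ℝ E] [FiniteDimensional ℝ E]
  [MeasurableSpace E] [BorelSpace E]

/-- `g` is the density of `⟪a, X⟫` when `X` has density `f`. -/
def IsMarginalDensity (μ : Measure E) (ν : Measure ℝ) (a : E) (f : E → ℝ) (g : ℝ → ℝ) : Prop :=
  ∀ φ : ℝ → ℝ, Measurable φ → ∫ x, φ ⟪a, x⟫ * f x ∂μ = ∫ t, φ t * g t ∂ν

lemma IsMarginalDensity.smulDensity {μ : Measure E} [μ.IsAddHaarMeasure] {ν : Measure ℝ}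
    [ν.IsAddHaarMeasure] {a : E} {f : E → ℝ} {g : ℝ → ℝ} (h : IsMarginalDensity μ ν a f g)
    {l : ℝ} (hl : 0 < l) :
    IsMarginalDensity μ ν a (_root_.smulDensity l f) (_root_.smulDensity l g) := by
  intro φ hφ
  rw [integral_mul_smulDensity hl, integral_mul_smulDensity hl]
  simp_rw [inner_smul_right, smul_eq_mul]
  exact h _ (hφ.comp (measurable_const_mul l))

lemma isMarginalDensity_stdGaussianPDFReal {a : E} (ha : a ≠ 0) :
    IsMarginalDensity volume volume a (stdGaussianPDFReal E)
      (smulDensity ‖a‖ (stdGaussianPDFReal ℝ)) := by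
  intro φ hφ
  rw [integral_comp_inner_mul_stdGaussianPDFReal a hφ, integral_mul_smulDensity (norm_pos_iff.2 ha)]
  rfl

end Marginal

lemma eq_zero_of_forall_mul_le {k C : ℝ} (h : ∀ L, k * L ≤ C) : k = 0 := by
  by_contra hk
  have := h ((C + 1) / k)
  rw [mul_div_cancel₀ _ hk] at this
  linarith

theorem subadditivity_forces_sum_eq_dim_general {n m : ℕ}
    (a : Fin m → EuclideanSpace ℝ (Fin n)) (ha : ∀ j, a j ≠ 0)
    (c : Fin m → ℝ) (D : ℝ)
    (H : ∀ (f : EuclideanSpace ℝ (Fin n) → ℝ) (fa : Fin m → ℝ → ℝ),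
      Measurable f → (∀ x, 0 ≤ f x) → Integrable f → (∫ x, f x) = 1 →
      Integrable (fun x => f x * Real.log (f x)) →
      (∀ j, Measurable (fa j)) → (∀ j t, 0 ≤ fa j t) →
      (∀ j, Integrable (fun t => fa j t * Real.log (fa j t))) →
      (∀ j (φ : ℝ → ℝ), Continuous φ → (∃ C, ∀ t, |φ t| ≤ C) →
        ∫ x, φ ((inner ℝ (a j) x : ℝ)) * f x = ∫ t, φ t * fa j t) →
      ∑ j, c j * ∫ t, fa j t * Real.log (fa j t) ≤
        (∫ x, f x * Real.log (f x)) + D) :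
    ∑ j, c j = n := by
  set p := stdGaussianPDFReal (EuclideanSpace ℝ (Fin n))
  set q : Fin m → ℝ → ℝ := fun j => smulDensity ‖a j‖ (stdGaussianPDFReal ℝ)
  have hp : IsFiniteEntropyDensity volume p := isFiniteEntropyDensity_stdGaussianPDFReal
  have hq j : IsFiniteEntropyDensity volume (q j) :=
    isFiniteEntropyDensity_stdGaussianPDFReal.smulDensity (norm_pos_iff.2 (ha j))
  refine (sub_eq_zero.1 (eq_zero_of_forall_mul_le
    (C := entropy volume p + D - ∑ j, c j * entropy volume (q j)) fun L => ?_)).symm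
  have hl := exp_pos L
  have hf := hp.smulDensity hl
  have hfa j := (hq j).smulDensity hl
  have key : ∑ j, c j * entropy volume (smulDensity (exp L) (q j)) ≤
      entropy volume (smulDensity (exp L) p) + D :=
    H _ _ hf.measurable hf.nonneg hf.integrable hf.integral_eq_one hf.integrable_mul_log
      (fun j => (hfa j).measurable) (fun j => (hfa j).nonneg) (fun j => (hfa j).integrable_mul_log)
      fun j φ hφ _ => ((isMarginalDensity_stdGaussianPDFReal (ha j)).smulDensity hl) φ hφ.measurable
  simp only [hp.entropy_smulDensity hl, (hq _).entropy_smulDensity hl, finrank_euclideanSpace_fin,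
    finrank_self, Nat.cast_one, one_mul, log_exp, mul_sub, Finset.sum_sub_distrib,
    ← Finset.sum_mul] at key
  linarith

/-- Necessary condition for subadditivity of entropy: if for some finite `D`,
`∑ j, c j * S(a j · X) ≤ S(X) + D` holds for every random vector `X` in `ℝⁿ`
with finite entropy (and with marginal densities `fa j` of finite entropy),
then `∑ j, c j = n`. -/
theorem subadditivity_forces_sum_eq_dim {n m : ℕ}
    (a : Fin m → EuclideanSpace ℝ (Fin n)) (ha : ∀ j, a j ≠ 0)
    (c : Fin m → ℝ) (hc : ∀ j, 0 ≤ c j) (D : ℝ)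
    (H : ∀ (f : EuclideanSpace ℝ (Fin n) → ℝ) (fa : Fin m → ℝ → ℝ),
      Measurable f → (∀ x, 0 ≤ f x) → Integrable f → (∫ x, f x) = 1 →
      Integrable (fun x => f x * Real.log (f x)) →
      (∀ j, Measurable (fa j)) → (∀ j t, 0 ≤ fa j t) →
      (∀ j, Integrable (fun t => fa j t * Real.log (fa j t))) →
      (∀ j (φ : ℝ → ℝ), Continuous φ → (∃ C, ∀ t, |φ t| ≤ C) →
        ∫ x, φ ((inner ℝ (a j) x : ℝ)) * f x = ∫ t, φ t * fa j t) →
      ∑ j, c j * ∫ t, fa j t * Real.log (fa j t) ≤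
        (∫ x, f x * Real.log (f x)) + D) :
    ∑ j, c j = n :=
  subadditivity_forces_sum_eq_dim_general a ha c D H
end

section
/- Let u_1, ..., u_m be unit vectors in ℝⁿ and c_1, ..., c_m ≥ 0 with ∑_j c_j u_j ⊗ u_j = Id_{ℝⁿ} (equivalently ∑_j c_j (x·u_j)² = |x|² for all x). Then for every sufficiently smooth probability density f on ℝⁿ with finite Fisher information, ∑_{j=1}^m c_j I(f_{(u_j)}) ≤ I(f), where f_{(u_j)} is the marginal density of u_j·X for X ∼ f. -/
open MeasureTheory Real Filter Topology


private lemma abs_le_aux (a c : ℝ) (hc : 0 < c) : |a| ≤ (a ^ 2 / c + c) / 2 := by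
  have h1 : a ^ 2 / c * c = a ^ 2 := div_mul_cancel₀ _ hc.ne'
  nlinarith [sq_nonneg (|a| - c), sq_abs a, abs_nonneg a]

private lemma amgm_aux (a b c : ℝ) (hc : 0 < c) : 2 * a * b - a ^ 2 * c ≤ b ^ 2 / c := by
  have h1 : b ^ 2 / c * c = b ^ 2 := div_mul_cancel₀ _ hc.ne'
  nlinarith [sq_nonneg (b - a * c)]

private lemma dir_ineq {n : ℕ} (u : EuclideanSpace ℝ (Fin n)) (hu : ‖u‖ = 1)
    (f : EuclideanSpace ℝ (Fin n) → ℝ)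
    (hf_smooth : ContDiff ℝ (⊤ : ℕ∞) f) (hf_pos : ∀ x, 0 < f x)
    (hf_int : Integrable f)
    (hDf_int : Integrable (fun x => fderiv ℝ f x u))
    (hDf2_int : Integrable (fun x => (fderiv ℝ f x u) ^ 2 / f x))
    (g : ℝ → ℝ) (hg_smooth : ContDiff ℝ (⊤ : ℕ∞) g) (hg_pos : ∀ t, 0 < g t)
    (hmarg : ∀ (φ : ℝ → ℝ), Continuous φ → (∃ C, ∀ t, |φ t| ≤ C) →
      ∫ x, φ ((inner ℝ u x : ℝ)) * f x = ∫ t, φ t * g t)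
    (hg_fisher : Integrable (fun t => (deriv g t) ^ 2 / g t)) :
    ∫ t, (deriv g t) ^ 2 / g t ≤ ∫ x, (fderiv ℝ f x u) ^ 2 / f x := by
  have hf_smooth : ContDiff ℝ (⊤:ℕ∞) f := hf_smooth.of_le (by simp)
  have hg_smooth : ContDiff ℝ (⊤:ℕ∞) g := hg_smooth.of_le (by simp)
  have hg_diff : Differentiable ℝ g := hg_smooth.differentiable (by simp)
  have hg'_smooth : ContDiff ℝ (⊤:ℕ∞) (deriv g) := (contDiff_infty_iff_deriv.1 hg_smooth).2
  have hg'_cont : Continuous (deriv g) := hg'_smooth.continuous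
  have hDf_cont : Continuous (fun x => fderiv ℝ f x u) :=
    (hf_smooth.continuous_fderiv (by simp)).clm_apply continuous_const
  -- integral of f is positive
  have hf_pos_int : 0 < ∫ x, f x := by
    apply (integral_pos_iff_support_of_nonneg (fun x => (hf_pos x).le) hf_int).2
    have : Function.support f = Set.univ := by
      ext x; simp [Function.support, (hf_pos x).ne']
    rw [this]
    exact isOpen_univ.measure_pos volume ⟨0, trivial⟩
  -- g is integrable
  have hg_int : Integrable g := by
    by_contra h
    have h1 := hmarg (fun _ => 1) continuous_const ⟨1, fun t => by norm_num⟩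
    simp only [one_mul] at h1
    exact hf_pos_int.ne' (h1.trans (integral_undef h))
  -- deriv g is integrable
  have hg'_int : Integrable (deriv g) := by
    refine ((hg_fisher.add hg_int).div_const 2).mono' hg'_cont.aestronglyMeasurable ?_
    filter_upwards with t
    calc ‖deriv g t‖ = |deriv g t| := rfl
      _ ≤ ((deriv g t) ^ 2 / g t + g t) / 2 := abs_le_aux _ _ (hg_pos t)
  -- the key integration-by-parts identity
  have key : ∀ ψ : ℝ → ℝ, ContDiff ℝ (⊤:ℕ∞) ψ → HasCompactSupport ψ →
      ∫ x, ψ ((inner ℝ u x : ℝ)) * fderiv ℝ f x u = ∫ t, ψ t * deriv g t := by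
    intro ψ hψ hψc
    have hψ_cont : Continuous ψ := hψ.continuous
    have hψ'_cont : Continuous (deriv ψ) := (contDiff_infty_iff_deriv.1 hψ).2.continuous
    obtain ⟨C, hC⟩ : ∃ C, ∀ t, ‖ψ t‖ ≤ C :=
      hψ_cont.bounded_above_of_compact_support hψc
    obtain ⟨C', hC'⟩ : ∃ C', ∀ t, ‖deriv ψ t‖ ≤ C' :=
      hψ'_cont.bounded_above_of_compact_support hψc.deriv
    -- fderiv of the composition
    have hF : ∀ x : EuclideanSpace ℝ (Fin n),
        fderiv ℝ (fun y => ψ ((inner ℝ u y : ℝ))) x u = deriv ψ ((inner ℝ u x : ℝ)) := by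
      intro x
      have h1 : HasFDerivAt (fun y => ψ ((inner ℝ u y : ℝ)))
          (deriv ψ ((inner ℝ u x : ℝ)) • (innerSL ℝ u)) x :=
        ((hψ.differentiable (by simp) _).hasDerivAt).comp_hasFDerivAt x (innerSL ℝ u).hasFDerivAt
      rw [h1.fderiv]
      simp only [ContinuousLinearMap.smul_apply, innerSL_apply_apply, smul_eq_mul]
      rw [real_inner_self_eq_norm_sq, hu]
      ring
    have hcomp_diff : Differentiable ℝ (fun y : EuclideanSpace ℝ (Fin n) => ψ ((inner ℝ u y : ℝ))) :=
      (hψ.differentiable (by simp)).comp (innerSL ℝ u).differentiable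
    have hinner_cont : Continuous (fun y : EuclideanSpace ℝ (Fin n) => (inner ℝ u y : ℝ)) :=
      (innerSL ℝ u).continuous
    -- integration by parts in ℝⁿ
    have h1 : ∫ x, ψ ((inner ℝ u x : ℝ)) * fderiv ℝ f x u
        = - ∫ x, fderiv ℝ (fun y => ψ ((inner ℝ u y : ℝ))) x u * f x := by
      apply integral_mul_fderiv_eq_neg_fderiv_mul_of_integrable
      · apply hf_int.bdd_mul ((hψ'_cont.comp hinner_cont).congr (fun x => (hF x).symm)).aestronglyMeasurable
        exact Filter.Eventually.of_forall (fun x => by rw [hF x]; exact hC' _)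
      · exact hDf_int.bdd_mul (hψ_cont.comp hinner_cont).aestronglyMeasurable (Filter.Eventually.of_forall fun x => hC _)
      · exact hf_int.bdd_mul (hψ_cont.comp hinner_cont).aestronglyMeasurable (Filter.Eventually.of_forall fun x => hC _)
      · exact fun x _ => hcomp_diff x
      · exact fun x _ => hf_smooth.differentiable (by simp) x
    have h2 : ∫ x, fderiv ℝ (fun y => ψ ((inner ℝ u y : ℝ))) x u * f x
        = ∫ t, deriv ψ t * g t := by
      rw [show (fun x : EuclideanSpace ℝ (Fin n) => fderiv ℝ (fun y => ψ ((inner ℝ u y : ℝ))) x u * f x)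
          = fun x => deriv ψ ((inner ℝ u x : ℝ)) * f x from funext fun x => by rw [hF x]]
      exact hmarg (deriv ψ) hψ'_cont ⟨C', fun t => hC' t⟩
    -- 1D integration by parts
    have h3 : ∫ t, ψ t * deriv g t = - ∫ t, deriv ψ t * g t := by
      have e1 : ∀ t : ℝ, deriv g t = fderiv ℝ g t 1 := fun t => rfl
      have e2 : ∀ t : ℝ, deriv ψ t = fderiv ℝ ψ t 1 := fun t => rfl
      simp only [e1, e2]
      apply integral_mul_fderiv_eq_neg_fderiv_mul_of_integrable
      · exact hg_int.bdd_mul ((hψ'_cont.congr (fun t => (e2 t))).aestronglyMeasurable) (Filter.Eventually.of_forall fun t => by rw [← e2 t]; exact hC' t)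
      · exact (hg'_int.congr (Filter.Eventually.of_forall (fun t => e1 t))).bdd_mul hψ_cont.aestronglyMeasurable (Filter.Eventually.of_forall fun t => hC t)
      · exact hg_int.bdd_mul hψ_cont.aestronglyMeasurable (Filter.Eventually.of_forall fun t => hC t)
      · exact fun x _ => hψ.differentiable (by simp) x
      · exact fun x _ => hg_diff x
    rw [h1, h2, h3]
  -- the smooth candidate φs = g'/g
  have hφs_smooth : ContDiff ℝ (⊤:ℕ∞) (fun t => deriv g t / g t) :=
    hg'_smooth.div hg_smooth (fun t => (hg_pos t).ne')
  have hχprop : ∀ k : ℕ, (0:ℝ) < k + 1 ∧ (k:ℝ) + 1 < k + 2 :=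
    fun k => ⟨by positivity, by linarith⟩
  let χk : ℕ → ContDiffBump (0:ℝ) := fun k => ⟨k+1, k+2, (hχprop k).1, (hχprop k).2⟩
  have main : ∀ k : ℕ,
      ∫ t, χk k t * ((deriv g t) ^ 2 / g t) ≤ ∫ x, (fderiv ℝ f x u) ^ 2 / f x := by
    intro k
    set χ : ContDiffBump (0:ℝ) := χk k with hχdef
    set ψ : ℝ → ℝ := fun t => χ t * (deriv g t / g t) with hψdef
    have hψ_smooth : ContDiff ℝ (⊤:ℕ∞) ψ := χ.contDiff.mul hφs_smooth
    have hψc : HasCompactSupport ψ := χ.hasCompactSupport.mul_right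
    have hψ_cont : Continuous ψ := hψ_smooth.continuous
    obtain ⟨C, hC⟩ : ∃ C, ∀ t, ‖ψ t‖ ≤ C :=
      hψ_cont.bounded_above_of_compact_support hψc
    have hinner_cont : Continuous (fun y : EuclideanSpace ℝ (Fin n) => (inner ℝ u y : ℝ)) :=
      (innerSL ℝ u).continuous
    have hψi_cont : Continuous (fun x : EuclideanSpace ℝ (Fin n) => ψ ((inner ℝ u x : ℝ))) :=
      hψ_cont.comp hinner_cont
    have hkey := key ψ hψ_smooth hψc
    -- marginal identity for ψ²
    have hsq := hmarg (fun t => (ψ t) ^ 2) (hψ_cont.pow 2)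
      ⟨C ^ 2, fun t => by
        rw [abs_pow, ← Real.norm_eq_abs]
        exact pow_le_pow_left₀ (norm_nonneg _) (hC t) 2⟩
    -- integrabilities
    have int1 : Integrable (fun t => ψ t * deriv g t) :=
      hg'_int.bdd_mul hψ_cont.aestronglyMeasurable (Filter.Eventually.of_forall hC)
    have int2 : Integrable (fun t => (ψ t) ^ 2 * g t) :=
      hg_int.bdd_mul (hψ_cont.pow 2).aestronglyMeasurable
        (Filter.Eventually.of_forall fun t => by
          rw [Real.norm_eq_abs, abs_pow, ← Real.norm_eq_abs]
          exact pow_le_pow_left₀ (norm_nonneg _) (hC t) 2)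
    have int3 : Integrable (fun x => ψ ((inner ℝ u x : ℝ)) * fderiv ℝ f x u) :=
      hDf_int.bdd_mul hψi_cont.aestronglyMeasurable (Filter.Eventually.of_forall fun x => hC _)
    have int4 : Integrable (fun x => (ψ ((inner ℝ u x : ℝ))) ^ 2 * f x) :=
      hf_int.bdd_mul (hψi_cont.pow 2).aestronglyMeasurable
        (Filter.Eventually.of_forall fun x => by
          rw [Real.norm_eq_abs, abs_pow, ← Real.norm_eq_abs]
          exact pow_le_pow_left₀ (norm_nonneg _) (hC _) 2)
    have int5 : Integrable (fun t => χ t * ((deriv g t) ^ 2 / g t)) :=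
      hg_fisher.bdd_mul χ.continuous.aestronglyMeasurable
        (Filter.Eventually.of_forall fun t => by
          rw [Real.norm_eq_abs, abs_of_nonneg (χ.nonneg' t)]; exact χ.le_one)
    have int6 : Integrable (fun t => (2 * χ t - χ t ^ 2) * ((deriv g t) ^ 2 / g t)) :=
      hg_fisher.bdd_mul (((continuous_const.mul χ.continuous)).sub (χ.continuous.pow 2)).aestronglyMeasurable (c := 1)
        (Filter.Eventually.of_forall fun t => by
          rw [Real.norm_eq_abs, abs_le]
          constructor <;> nlinarith [χ.nonneg' t, χ.le_one (x := t)])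
    calc ∫ t, χ t * ((deriv g t) ^ 2 / g t)
        ≤ ∫ t, (2 * χ t - χ t ^ 2) * ((deriv g t) ^ 2 / g t) := by
          apply integral_mono int5 int6
          intro t
          apply mul_le_mul_of_nonneg_right ?_ (div_nonneg (sq_nonneg _) (hg_pos t).le)
          nlinarith [χ.nonneg' t, χ.le_one (x := t)]
      _ = ∫ t, (2 * (ψ t * deriv g t) - (ψ t) ^ 2 * g t) := by
          apply integral_congr_ae
          filter_upwards with t
          have hgne := (hg_pos t).ne'
          simp only [hψdef]
          field_simp
      _ = (2 * ∫ t, ψ t * deriv g t) - ∫ t, (ψ t) ^ 2 * g t := by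
          rw [integral_sub (int1.const_mul 2) int2, integral_const_mul]
      _ = (2 * ∫ x, ψ ((inner ℝ u x : ℝ)) * fderiv ℝ f x u)
            - ∫ x, (ψ ((inner ℝ u x : ℝ))) ^ 2 * f x := by
          have hsq' : ∫ x, (ψ ((inner ℝ u x : ℝ))) ^ 2 * f x = ∫ t, (ψ t) ^ 2 * g t := hsq
          rw [hkey, hsq']
      _ = ∫ x, (2 * (ψ ((inner ℝ u x : ℝ)) * fderiv ℝ f x u)
            - (ψ ((inner ℝ u x : ℝ))) ^ 2 * f x) := by
          rw [integral_sub (int3.const_mul 2) int4, integral_const_mul]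
      _ ≤ ∫ x, (fderiv ℝ f x u) ^ 2 / f x := by
          apply integral_mono ((int3.const_mul 2).sub int4) hDf2_int
          intro x
          have h := amgm_aux (ψ ((inner ℝ u x : ℝ))) (fderiv ℝ f x u) (f x) (hf_pos x)
          simp only [Pi.sub_apply]
          linarith [h]
  have hq_cont : Continuous (fun t => (deriv g t) ^ 2 / g t) :=
    (hg'_cont.pow 2).div hg_smooth.continuous (fun t => (hg_pos t).ne')
  have hlim : Tendsto (fun k : ℕ => ∫ t, χk k t * ((deriv g t) ^ 2 / g t)) atTop
      (𝓝 (∫ t, (deriv g t) ^ 2 / g t)) := by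
    apply tendsto_integral_of_dominated_convergence (fun t => (deriv g t) ^ 2 / g t)
      (fun k => ((χk k).continuous.mul hq_cont).aestronglyMeasurable) hg_fisher
    · intro k
      filter_upwards with t
      simp only [Pi.mul_apply]
      rw [Real.norm_eq_abs, abs_mul, abs_of_nonneg ((χk k).nonneg' t),
        abs_of_nonneg (div_nonneg (sq_nonneg _) (hg_pos t).le)]
      calc χk k t * ((deriv g t) ^ 2 / g t) ≤ 1 * ((deriv g t) ^ 2 / g t) :=
            mul_le_mul_of_nonneg_right ((χk k).le_one) (div_nonneg (sq_nonneg _) (hg_pos t).le)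
        _ = (deriv g t) ^ 2 / g t := one_mul _
    · filter_upwards with t
      apply Filter.Tendsto.congr' ?_ tendsto_const_nhds
      filter_upwards [eventually_ge_atTop ⌈|t|⌉₊] with k hk
      have ht : t ∈ Metric.closedBall (0:ℝ) ((χk k).rIn) := by
        simp only [Metric.mem_closedBall, Real.dist_eq, sub_zero]
        calc |t| ≤ (⌈|t|⌉₊ : ℝ) := Nat.le_ceil _
          _ ≤ (k : ℝ) := by exact_mod_cast hk
          _ ≤ (k : ℝ) + 1 := by linarith
      simp only [Pi.mul_apply]
      rw [(χk k).one_of_mem_closedBall ht, one_mul]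
  exact le_of_tendsto hlim (Eventually.of_forall main)



/-- Superadditivity of the Fisher information: if unit vectors `u j` and `c j ≥ 0`
satisfy the decomposition of the identity `∑ j, c j (x · u j)² = |x|²`, then for every
smooth positive probability density `f` on `ℝⁿ` with finite Fisher information,
`∑ j, c j I(f_{(u j)}) ≤ I(f)`, where `fu j` is the marginal density of `u j · X`. -/
theorem fisher_information_superadditivity {n m : ℕ}
    (u : Fin m → EuclideanSpace ℝ (Fin n)) (hu : ∀ j, ‖u j‖ = 1)
    (c : Fin m → ℝ) (hc : ∀ j, 0 ≤ c j)
    (hdecomp : ∀ x : EuclideanSpace ℝ (Fin n),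
      ∑ j, c j * ((inner ℝ x (u j) : ℝ)) ^ 2 = ‖x‖ ^ 2)
    (f : EuclideanSpace ℝ (Fin n) → ℝ)
    (hf_smooth : ContDiff ℝ (⊤ : ℕ∞) f) (hf_pos : ∀ x, 0 < f x)
    (hf_int : Integrable f) (hf_one : ∫ x, f x = 1)
    (hf_fisher : Integrable (fun x => ‖gradient f x‖ ^ 2 / f x))
    (fu : Fin m → ℝ → ℝ)
    (hfu_smooth : ∀ j, ContDiff ℝ (⊤ : ℕ∞) (fu j)) (hfu_pos : ∀ j t, 0 < fu j t)
    (hfu_marg : ∀ j (φ : ℝ → ℝ), Continuous φ → (∃ C, ∀ t, |φ t| ≤ C) →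
      ∫ x, φ ((inner ℝ (u j) x : ℝ)) * f x = ∫ t, φ t * fu j t)
    (hfu_fisher : ∀ j, Integrable (fun t => (deriv (fu j) t) ^ 2 / fu j t)) :
    ∑ j, c j * ∫ t, (deriv (fu j) t) ^ 2 / fu j t ≤
      ∫ x, ‖gradient f x‖ ^ 2 / f x := by
  have hf_smooth' : ContDiff ℝ (⊤:ℕ∞) f := hf_smooth.of_le (by simp)
  have hgrad : ∀ (x v : EuclideanSpace ℝ (Fin n)),
      (inner ℝ (gradient f x) v : ℝ) = fderiv ℝ f x v := fun x v => by
    rw [gradient, InnerProductSpace.toDual_symm_apply]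
  have hDf_cont : ∀ j, Continuous fun x => fderiv ℝ f x (u j) := fun j =>
    (hf_smooth'.continuous_fderiv (by simp)).clm_apply continuous_const
  have habs : ∀ j x, |fderiv ℝ f x (u j)| ≤ ‖gradient f x‖ := fun j x => by
    rw [← hgrad]
    calc |(inner ℝ (gradient f x) (u j) : ℝ)| ≤ ‖gradient f x‖ * ‖u j‖ :=
          abs_real_inner_le_norm _ _
      _ = ‖gradient f x‖ := by rw [hu j, mul_one]
  have hDf_int : ∀ j, Integrable fun x => fderiv ℝ f x (u j) := fun j => by
    refine ((hf_fisher.add hf_int).div_const 2).mono' (hDf_cont j).aestronglyMeasurable ?_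
    filter_upwards with x
    calc ‖fderiv ℝ f x (u j)‖ = |fderiv ℝ f x (u j)| := rfl
      _ ≤ ‖gradient f x‖ := habs j x
      _ = |‖gradient f x‖| := (abs_of_nonneg (norm_nonneg _)).symm
      _ ≤ (‖gradient f x‖ ^ 2 / f x + f x) / 2 := abs_le_aux _ _ (hf_pos x)
  have hDf2_int : ∀ j, Integrable fun x => (fderiv ℝ f x (u j)) ^ 2 / f x := fun j => by
    refine hf_fisher.mono' (((hDf_cont j).pow 2).div hf_smooth'.continuous
      (fun x => (hf_pos x).ne')).aestronglyMeasurable ?_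
    filter_upwards with x
    rw [Real.norm_eq_abs, abs_of_nonneg (div_nonneg (sq_nonneg _) (hf_pos x).le)]
    have h2 : (fderiv ℝ f x (u j)) ^ 2 ≤ ‖gradient f x‖ ^ 2 := by
      nlinarith [habs j x, abs_nonneg (fderiv ℝ f x (u j)), sq_abs (fderiv ℝ f x (u j)),
        norm_nonneg (gradient f x)]
    gcongr
    exact (hf_pos x).le
  have hdir : ∀ j, ∫ t, (deriv (fu j) t) ^ 2 / fu j t
      ≤ ∫ x, (fderiv ℝ f x (u j)) ^ 2 / f x := fun j =>
    dir_ineq (u j) (hu j) f hf_smooth hf_pos hf_int (hDf_int j) (hDf2_int j)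
      (fu j) (hfu_smooth j) (hfu_pos j) (hfu_marg j) (hfu_fisher j)
  calc ∑ j, c j * ∫ t, (deriv (fu j) t) ^ 2 / fu j t
      ≤ ∑ j, c j * ∫ x, (fderiv ℝ f x (u j)) ^ 2 / f x :=
        Finset.sum_le_sum fun j _ => mul_le_mul_of_nonneg_left (hdir j) (hc j)
    _ = ∑ j, ∫ x, c j * ((fderiv ℝ f x (u j)) ^ 2 / f x) :=
        Finset.sum_congr rfl fun j _ => (integral_const_mul _ _).symm
    _ = ∫ x, ∑ j, c j * ((fderiv ℝ f x (u j)) ^ 2 / f x) :=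
        (integral_finset_sum _ fun j _ => (hDf2_int j).const_mul _).symm
    _ = ∫ x, ‖gradient f x‖ ^ 2 / f x := by
        apply integral_congr_ae
        filter_upwards with x
        have hd := hdecomp (gradient f x)
        calc ∑ j, c j * ((fderiv ℝ f x (u j)) ^ 2 / f x)
            = (∑ j, c j * (fderiv ℝ f x (u j)) ^ 2) / f x := by
              rw [Finset.sum_div]
              exact Finset.sum_congr rfl fun j _ => (mul_div_assoc _ _ _).symm
          _ = ‖gradient f x‖ ^ 2 / f x := by
              rw [← hd]
              congr 1
              exact Finset.sum_congr rfl fun j _ => by rw [hgrad]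
end

section
/- Let n ≥ 2 and let u_1, ..., u_m be unit vectors forming an irreducible spanning set of ℝⁿ, with no two linearly dependent. Suppose F : ℝⁿ → ℝ is smooth and for each i there exist functions G_i : ℝ → ℝ and H_i : u_i^⊥ → ℝ with F(x) = G_i(x·u_i) + H_i(x − (x·u_i)u_i) for all x. Then the Hessian of F is constant (F is a quadratic polynomial). -/
open Real
open scoped RealInnerProductSpace

section aux

variable {W : Type*} [NormedAddCommGroup W] [NormedSpace ℝ W]

lemma aux_update0 (a a' b : W) : Function.update ![a', b] 0 a = ![a, b] := by
  funext k
  fin_cases k <;> simp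

lemma aux_update1 (a b b' : W) : Function.update ![a, b'] 1 b = ![a, b] := by
  funext k
  fin_cases k <;> simp

lemma aux_smul_fst (T : ContinuousMultilinearMap ℝ (fun _ : Fin 2 => W) ℝ) (c : ℝ) (a b : W) :
    T ![c • a, b] = c * T ![a, b] := by
  have h := T.map_update_smul ![a, b] 0 c a
  rwa [aux_update0, aux_update0, smul_eq_mul] at h

lemma aux_smul_snd (T : ContinuousMultilinearMap ℝ (fun _ : Fin 2 => W) ℝ) (c : ℝ) (a b : W) :
    T ![a, c • b] = c * T ![a, b] := by
  have h := T.map_update_smul ![a, b] 1 c b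
  rwa [aux_update1, aux_update1, smul_eq_mul] at h

lemma aux_add_fst (T : ContinuousMultilinearMap ℝ (fun _ : Fin 2 => W) ℝ) (a a' b : W) :
    T ![a + a', b] = T ![a, b] + T ![a', b] := by
  have h := T.map_update_add ![a, b] 0 a a'
  rwa [aux_update0, aux_update0, aux_update0] at h

/-- The key computation: if `F` splits along the unit direction `v`, then the mixed second
derivative `D²F(x)(v, w)` equals `⟪v,w⟫ · D²F(⟪v,x⟫ • v)(v,v)`. -/
lemma aux_key {n : ℕ} (F : EuclideanSpace ℝ (Fin n) → ℝ) (hF : ContDiff ℝ (⊤ : ℕ∞) F)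
    (v : EuclideanSpace ℝ (Fin n)) (hv : ‖v‖ = 1)
    (G : ℝ → ℝ) (H : EuclideanSpace ℝ (Fin n) → ℝ)
    (hGH : ∀ x, F x = G ⟪v, x⟫ + H (x - ⟪v, x⟫ • v)) (x w : EuclideanSpace ℝ (Fin n)) :
    iteratedFDeriv ℝ 2 F x ![v, w] = ⟪v, w⟫ * iteratedFDeriv ℝ 2 F (⟪v, x⟫ • v) ![v, v] := by
  have hvv : ⟪v, v⟫ = 1 := by rw [real_inner_self_eq_norm_sq, hv]; norm_num
  set L : EuclideanSpace ℝ (Fin n) →L[ℝ] EuclideanSpace ℝ (Fin n) :=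
    (innerSL ℝ v).smulRight v with hLdef
  set Q : EuclideanSpace ℝ (Fin n) →L[ℝ] EuclideanSpace ℝ (Fin n) :=
    ContinuousLinearMap.id ℝ _ - L with hQdef
  have hLapp : ∀ y, L y = ⟪v, y⟫ • v := fun y => rfl
  have hQapp : ∀ y, Q y = y - ⟪v, y⟫ • v := fun y => rfl
  have hFeq : F = (F ∘ L) + ((F ∘ Q) + fun _ => -F 0) := by
    funext z
    have h1 : ⟪v, L z⟫ = ⟪v, z⟫ := by
      rw [hLapp, real_inner_smul_right, hvv, mul_one]
    have h2 : ⟪v, Q z⟫ = 0 := by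
      rw [hQapp, inner_sub_right, real_inner_smul_right, hvv, mul_one, sub_self]
    have e1 : F (L z) = G ⟪v, z⟫ + H 0 := by
      rw [hGH (L z), h1, hLapp, sub_self]
    have e2 : F (Q z) = G 0 + H (z - ⟪v, z⟫ • v) := by
      rw [hGH (Q z), h2, zero_smul, sub_zero, hQapp]
    have e3 : F 0 = G 0 + H 0 := by
      rw [hGH 0, inner_zero_right, zero_smul, sub_zero]
    simp only [Pi.add_apply, Function.comp_apply]
    rw [hGH z, e1, e2, e3]
    ring
  have h2F : ContDiff ℝ 2 F := hF.of_le (by exact WithTop.coe_le_coe.mpr (le_top : (2:ℕ∞) ≤ ⊤))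
  have hCL : ContDiff ℝ 2 (F ∘ L) := h2F.comp L.contDiff
  have hCQ : ContDiff ℝ 2 (F ∘ Q) := h2F.comp Q.contDiff
  have step : iteratedFDeriv ℝ 2 F x ![v, w]
      = iteratedFDeriv ℝ 2 (F ∘ L) x ![v, w] + iteratedFDeriv ℝ 2 (F ∘ Q) x ![v, w] := by
    have e := congrArg (fun f => iteratedFDeriv ℝ 2 f x ![v, w]) hFeq
    have hCQc : ContDiff ℝ 2 ((F ∘ ⇑Q) + fun _ : EuclideanSpace ℝ (Fin n) => -F 0) :=
      hCQ.add contDiff_const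
    rw [e, iteratedFDeriv_add_apply hCL.contDiffAt hCQc.contDiffAt,
      iteratedFDeriv_add_apply hCQ.contDiffAt contDiff_const.contDiffAt,
      iteratedFDeriv_const_of_ne (by norm_num : (2 : ℕ) ≠ 0)]
    simp
  have cL : iteratedFDeriv ℝ 2 (F ∘ L) x ![v, w]
      = ⟪v, w⟫ * iteratedFDeriv ℝ 2 F (⟪v, x⟫ • v) ![v, v] := by
    rw [L.iteratedFDeriv_comp_right hF x (by exact WithTop.coe_le_coe.mpr (le_top : (2:ℕ∞) ≤ ⊤)),
      ContinuousMultilinearMap.compContinuousLinearMap_apply]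
    have harg : (fun k => L (![v, w] k)) = ![v, ⟪v, w⟫ • v] := by
      funext k
      fin_cases k
      · simp [hLapp, hvv, hv]
      · simp [hLapp]
    rw [harg, aux_smul_snd, hLapp]
  have cQ : iteratedFDeriv ℝ 2 (F ∘ Q) x ![v, w] = 0 := by
    rw [Q.iteratedFDeriv_comp_right hF x (by exact WithTop.coe_le_coe.mpr (le_top : (2:ℕ∞) ≤ ⊤)),
      ContinuousMultilinearMap.compContinuousLinearMap_apply]
    apply ContinuousMultilinearMap.map_coord_zero _ (0 : Fin 2)
    simp [hQapp, hvv, hv]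
  rw [step, cL, cQ, add_zero]

end aux

/-- If `{u 1, …, u m}` is an irreducible spanning set of unit vectors of `ℝⁿ` (`n ≥ 2`),
no two of which are linearly dependent, and a smooth `F : ℝⁿ → ℝ` splits along each
direction `u i` as `F x = G i (x · u i) + H i (x - (x · u i) u i)`, then the Hessian
of `F` is constant. -/
theorem splitting_implies_constant_hessian {n m : ℕ} (hn : 2 ≤ n)
    (u : Fin m → EuclideanSpace ℝ (Fin n)) (hu : ∀ j, ‖u j‖ = 1)
    (hspan : Submodule.span ℝ (Set.range u) = ⊤)
    (hirr : ¬ ∃ V₁ V₂ : Submodule ℝ (EuclideanSpace ℝ (Fin n)),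
      V₁ ≠ ⊤ ∧ V₂ ≠ ⊤ ∧ IsCompl V₁ V₂ ∧ ∀ j, u j ∈ V₁ ∨ u j ∈ V₂)
    (hindep : ∀ i j, i ≠ j → ∀ t : ℝ, u i ≠ t • u j)
    (F : EuclideanSpace ℝ (Fin n) → ℝ) (hF : ContDiff ℝ (⊤ : ℕ∞) F)
    (hsplit : ∀ i, ∃ (G : ℝ → ℝ) (H : EuclideanSpace ℝ (Fin n) → ℝ),
      ∀ x, F x = G ((inner ℝ (u i) x : ℝ)) + H (x - ((inner ℝ (u i) x : ℝ)) • u i)) :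
    ∀ x y, iteratedFDeriv ℝ 2 F x = iteratedFDeriv ℝ 2 F y := by
  classical
  have hone : ∀ i, ⟪u i, u i⟫ = 1 := fun i => by
    rw [real_inner_self_eq_norm_sq, hu]; norm_num
  have key : ∀ (i : Fin m) x w, iteratedFDeriv ℝ 2 F x ![u i, w]
      = ⟪u i, w⟫ * iteratedFDeriv ℝ 2 F (⟪u i, x⟫ • u i) ![u i, u i] := by
    intro i x w
    obtain ⟨G, H, hGH⟩ := hsplit i
    exact aux_key F hF (u i) (hu i) G H hGH x w
  have hsym : ∀ x v w, iteratedFDeriv ℝ 2 F x ![v, w] = iteratedFDeriv ℝ 2 F x ![w, v] := by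
    intro x v w
    rw [iteratedFDeriv_two_apply, iteratedFDeriv_two_apply]
    have h := (hF.contDiffAt (x := x)).isSymmSndFDerivAt (by rw [minSmoothness_of_isRCLikeNormedField]; exact WithTop.coe_le_coe.mpr (le_top : (2:ℕ∞) ≤ ⊤))
    simpa using h v w
  have hnbr : ∀ i : Fin m, ∃ j, i ≠ j ∧ ⟪u i, u j⟫ ≠ 0 := by
    intro i
    by_contra hcon
    push_neg at hcon
    apply hirr
    refine ⟨ℝ ∙ u i, (ℝ ∙ u i)ᗮ, ?_, ?_,
      Submodule.isCompl_orthogonal_of_hasOrthogonalProjection, ?_⟩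
    · intro h
      have h0 : u i ≠ 0 := by
        intro h0
        have := hu i
        rw [h0, norm_zero] at this
        norm_num at this
      have h1 : Module.finrank ℝ (ℝ ∙ u i) = 1 := finrank_span_singleton h0
      rw [h, finrank_top, finrank_euclideanSpace_fin] at h1
      omega
    · intro h
      have hm : u i ∈ (ℝ ∙ u i)ᗮ := h ▸ Submodule.mem_top
      rw [Submodule.mem_orthogonal_singleton_iff_inner_right, hone i] at hm
      norm_num at hm
    · intro j
      by_cases hij : i = j
      · left; rw [← hij]; exact Submodule.mem_span_singleton_self _
      · right; exact Submodule.mem_orthogonal_singleton_iff_inner_right.mpr (hcon j hij)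
  have hzero : ∀ (i : Fin m) (s : ℝ), iteratedFDeriv ℝ 2 F (s • u i) ![u i, u i]
      = iteratedFDeriv ℝ 2 F 0 ![u i, u i] := by
    intro i s
    obtain ⟨j, hij, hc⟩ := hnbr i
    set c : ℝ := ⟪u i, u j⟫ with hcdef
    have hcsym : ⟪u j, u i⟫ = c := real_inner_comm _ _
    have hrel : ∀ x : EuclideanSpace ℝ (Fin n),
        iteratedFDeriv ℝ 2 F (⟪u i, x⟫ • u i) ![u i, u i]
          = iteratedFDeriv ℝ 2 F (⟪u j, x⟫ • u j) ![u j, u j] := by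
      intro x
      have h1 := key i x (u j)
      have h2 := key j x (u i)
      rw [hcsym] at h2
      have h3 : c * iteratedFDeriv ℝ 2 F (⟪u i, x⟫ • u i) ![u i, u i]
          = c * iteratedFDeriv ℝ 2 F (⟪u j, x⟫ • u j) ![u j, u j] :=
        h1.symm.trans ((hsym x (u i) (u j)).trans h2)
      exact mul_left_cancel₀ hc h3
    have hne1 : u i ≠ u j := by
      have := hindep i j hij 1
      rwa [one_smul] at this
    have hne2 : u i ≠ -u j := by
      have := hindep i j hij (-1)
      rwa [neg_one_smul] at this
    have hlt1 : c < 1 := (inner_lt_one_iff_real_of_norm_eq_one (hu i) (hu j)).mpr hne1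
    have hlt2 : -c < 1 := by
      have hnorm : ‖-u j‖ = 1 := by rw [norm_neg]; exact hu j
      have h := (inner_lt_one_iff_real_of_norm_eq_one (hu i) hnorm).mpr hne2
      rwa [inner_neg_right] at h
    have hden : (1 : ℝ) - c ^ 2 ≠ 0 := by nlinarith
    set a : ℝ := s / (1 - c ^ 2) with hadef
    have ha : a * (1 - c ^ 2) = s := div_mul_cancel₀ s hden
    set x₀ : EuclideanSpace ℝ (Fin n) := a • u i - (a * c) • u j with hx₀
    have hxi : ⟪u i, x₀⟫ = s := by
      rw [hx₀, inner_sub_right, real_inner_smul_right, real_inner_smul_right, hone i,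
        ← hcdef]
      nlinarith [ha]
    have hxj : ⟪u j, x₀⟫ = 0 := by
      rw [hx₀, inner_sub_right, real_inner_smul_right, real_inner_smul_right, hone j,
        hcsym]
      ring
    have e1 := hrel x₀
    rw [hxi, hxj, zero_smul] at e1
    have e2 := hrel 0
    rw [inner_zero_right, inner_zero_right, zero_smul, zero_smul] at e2
    exact e1.trans e2.symm
  intro x y
  have huw : ∀ (i : Fin m) w, iteratedFDeriv ℝ 2 F x ![u i, w]
      = iteratedFDeriv ℝ 2 F y ![u i, w] := by
    intro i w
    rw [key i x w, key i y w, hzero i ⟪u i, x⟫, hzero i ⟪u i, y⟫]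
  let S : Submodule ℝ (EuclideanSpace ℝ (Fin n)) :=
    { carrier := {v | ∀ w, iteratedFDeriv ℝ 2 F x ![v, w] = iteratedFDeriv ℝ 2 F y ![v, w]}
      add_mem' := by
        intro a b ha hb w
        rw [aux_add_fst, aux_add_fst, ha w, hb w]
      zero_mem' := by
        intro w
        rw [ContinuousMultilinearMap.map_coord_zero _ (0 : Fin 2) (by simp),
          ContinuousMultilinearMap.map_coord_zero _ (0 : Fin 2) (by simp)]
      smul_mem' := by
        intro c a ha w
        rw [aux_smul_fst, aux_smul_fst, ha w] }
  have hS : ∀ v, v ∈ S := by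
    have h1 : Submodule.span ℝ (Set.range u) ≤ S := Submodule.span_le.mpr (by
      rintro _ ⟨i, rfl⟩
      exact huw i)
    rw [hspan] at h1
    exact fun v => h1 Submodule.mem_top
  ext mvec
  have hmv : mvec = ![mvec 0, mvec 1] := by
    funext k
    fin_cases k <;> simp
  rw [hmv]
  exact hS (mvec 0) (mvec 1)
end

section
/- Let u_1, ..., u_m be unit vectors in ℝⁿ with ∑_j c_j u_j ⊗ u_j = Id_{ℝⁿ} for some c_j ≥ 0, and let K. Ball's inequality hold in the form of Theorem 4.1 with D = 0: for any linear transformation T : ℝⁿ → ℝⁿ, |det T| ≤ ∏_{j=1}^m |T u_j|^{c_j}. -/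
/-!
Diagonalise the positive operator `S = T† T` in an orthonormal eigenbasis `(bᵢ)` with eigenvalues
`μᵢ ≥ 0`. For a unit vector `u` the weights `⟪bᵢ, u⟫²` sum to `1`, so weighted AM–GM gives
`∏ᵢ μᵢ ^ ⟪bᵢ, u⟫² ≤ ∑ᵢ μᵢ ⟪bᵢ, u⟫² = ⟪S u, u⟫ = ‖T u‖²`. The decomposition of the identity says
`∑ⱼ cⱼ ⟪bᵢ, uⱼ⟫² = 1`, hence
`(det T)² = det S = ∏ᵢ μᵢ = ∏ⱼ (∏ᵢ μᵢ ^ ⟪bᵢ, uⱼ⟫²) ^ cⱼ ≤ ∏ⱼ ‖T uⱼ‖ ^ (2 cⱼ)`.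
-/

open Real

open scoped InnerProductSpace

namespace LinearMap

variable {E : Type*} [NormedAddCommGroup E] [InnerProductSpace ℝ E] [FiniteDimensional ℝ E]
  {S : E →ₗ[ℝ] E} {n : ℕ}

theorem IsSymmetric.inner_map_self_eq_sum_eigenvalues (hS : S.IsSymmetric)
    (hn : Module.finrank ℝ E = n) (x : E) :
    ⟪S x, x⟫_ℝ = ∑ i, hS.eigenvalues hn i * ⟪hS.eigenvectorBasis hn i, x⟫_ℝ ^ 2 := by
  rw [← (hS.eigenvectorBasis hn).sum_inner_mul_inner (S x) x]
  refine Finset.sum_congr rfl fun i _ => ?_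
  rw [hS, hS.apply_eigenvectorBasis, real_inner_smul_right, real_inner_comm x,
    RCLike.ofReal_real_eq_id, id_eq]
  ring

theorem IsPositive.prod_eigenvalues_rpow_le_inner_map_self (hS : S.IsPositive)
    (hn : Module.finrank ℝ E = n) {x : E} (hx : ‖x‖ = 1) :
    ∏ i, hS.isSymmetric.eigenvalues hn i ^ (⟪hS.isSymmetric.eigenvectorBasis hn i, x⟫_ℝ ^ 2)
      ≤ ⟪S x, x⟫_ℝ := by
  have hweights : ∑ i, ⟪hS.isSymmetric.eigenvectorBasis hn i, x⟫_ℝ ^ 2 = 1 := by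
    simpa [hx] using (hS.isSymmetric.eigenvectorBasis hn).sum_sq_norm_inner_right x
  rw [hS.isSymmetric.inner_map_self_eq_sum_eigenvalues hn,
    ← Finset.sum_congr rfl fun i _ => mul_comm _ _]
  exact geom_mean_le_arith_mean_weighted _ _ _ (fun i _ => sq_nonneg _) hweights
    fun i _ => hS.nonneg_eigenvalues hn i

theorem IsPositive.det_le_prod_inner_map_self_rpow {ι : Type*} [Fintype ι] (hS : S.IsPositive)
    {u : ι → E} (hu : ∀ j, ‖u j‖ = 1) {c : ι → ℝ} (hc : ∀ j, 0 ≤ c j)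
    (hdecomp : ∀ x, ∑ j, c j * ⟪x, u j⟫_ℝ ^ 2 = ‖x‖ ^ 2) :
    S.det ≤ ∏ j, ⟪S (u j), u j⟫_ℝ ^ c j := by
  set b := hS.isSymmetric.eigenvectorBasis rfl
  set μ := hS.isSymmetric.eigenvalues rfl
  have hμ : ∀ i, 0 ≤ μ i := hS.nonneg_eigenvalues rfl
  have hweights : ∀ i, ∑ j, c j * ⟪b i, u j⟫_ℝ ^ 2 = 1 := fun i => by
    simpa using hdecomp (b i)
  calc S.det = ∏ i, μ i := by simpa using hS.isSymmetric.det_eq_prod_eigenvalues rfl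
    _ = ∏ i, ∏ j, μ i ^ (c j * ⟪b i, u j⟫_ℝ ^ 2) := Finset.prod_congr rfl fun i _ => by
      rw [← rpow_sum_of_nonneg (hμ i) fun j _ => by have := hc j; positivity, hweights, rpow_one]
    _ = ∏ j, (∏ i, μ i ^ (⟪b i, u j⟫_ℝ ^ 2)) ^ c j := by
      rw [Finset.prod_comm]
      refine Finset.prod_congr rfl fun j _ => ?_
      rw [← finsetProd_rpow _ _ fun i _ => rpow_nonneg (hμ i) _]
      exact Finset.prod_congr rfl fun i _ => by rw [mul_comm, rpow_mul (hμ i)]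
    _ ≤ ∏ j, ⟪S (u j), u j⟫_ℝ ^ c j := by
      have hgeom : ∀ j, 0 ≤ ∏ i, μ i ^ (⟪b i, u j⟫_ℝ ^ 2) :=
        fun j => Finset.prod_nonneg fun i _ => rpow_nonneg (hμ i) _
      refine Finset.prod_le_prod (fun j _ => rpow_nonneg (hgeom j) _) fun j _ => ?_
      exact rpow_le_rpow (hgeom j) (hS.prod_eigenvalues_rpow_le_inner_map_self rfl (hu j)) (hc j)

end LinearMap

/-- Ball's inequality: if unit vectors `u j` in `ℝⁿ` and `c j ≥ 0` satisfy
`∑ j, c j (u j ⊗ u j) = Id`, then for every linear map `T : ℝⁿ → ℝⁿ`,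
`|det T| ≤ ∏ j, |T u j| ^ (c j)`. -/
theorem ball_inequality {n m : ℕ}
    (u : Fin m → EuclideanSpace ℝ (Fin n)) (hu : ∀ j, ‖u j‖ = 1)
    (c : Fin m → ℝ) (hc : ∀ j, 0 ≤ c j)
    (hdecomp : ∀ x y : EuclideanSpace ℝ (Fin n),
      ∑ j, c j * ((inner ℝ x (u j) : ℝ) * (inner ℝ y (u j) : ℝ)) = (inner ℝ x y : ℝ))
    (T : EuclideanSpace ℝ (Fin n) →ₗ[ℝ] EuclideanSpace ℝ (Fin n)) :
    |LinearMap.det T| ≤ ∏ j, ‖T (u j)‖ ^ c j := by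
  have hquad : ∀ x, ∑ j, c j * ⟪x, u j⟫_ℝ ^ 2 = ‖x‖ ^ 2 := fun x => by
    simpa only [← sq, real_inner_self_eq_norm_sq] using hdecomp x x
  have hgram : ∀ x, ⟪(T.adjoint ∘ₗ T) x, x⟫_ℝ = ‖T x‖ ^ 2 := fun x => by
    rw [LinearMap.comp_apply, LinearMap.adjoint_inner_left, real_inner_self_eq_norm_sq]
  refine (pow_le_pow_iff_left₀ (abs_nonneg _) (by positivity) two_ne_zero).mp ?_
  calc |T.det| ^ 2 = (T.adjoint ∘ₗ T).det := by
        rw [← T.normDet_eq_abs_det]; exact_mod_cast T.normDet_sq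
    _ ≤ ∏ j, ⟪(T.adjoint ∘ₗ T) (u j), u j⟫_ℝ ^ c j :=
        T.isPositive_adjoint_comp_self.det_le_prod_inner_map_self_rpow hu hc hquad
    _ = (∏ j, ‖T (u j)‖ ^ c j) ^ 2 := by
        simp_rw [hgram, ← rpow_pow_comm (norm_nonneg _), Finset.prod_pow]
end

section
/- Let A = [a_1,...,a_m] be an n×m matrix of full row rank and define Φ_A(t_1,...,t_m) = ln det(A e^T A^t), where T = diag(t_1,...,t_m). Then Φ_A is a convex function on ℝ^m. -/
/-!
By Cauchy–Binet, `det (A e^T Aᵀ) = ∑_S det (A_S)² e^{∑_{j ∈ S} t_j}`, the sum running over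
the `n`-element sets `S` of columns. So `Φ_A` is the logarithm of a nonnegative combination of
exponentials of linear forms, and such a function is convex by Hölder's inequality.
-/

open Finset Equiv Matrix Real

theorem Tuple.sort_comp_perm_of_strictMono {n : ℕ} {α : Type*} [LinearOrder α]
    {g : Fin n → α} (hg : StrictMono g) (σ : Perm (Fin n)) :
    Tuple.sort (g ∘ σ) = σ⁻¹ := by
  refine (Tuple.eq_sort_iff.2 ⟨?_, fun i j hij heq => ?_⟩).symm
  · simpa [Function.comp_def] using hg.monotone
  · exact absurd (by simpa using hg.injective heq) hij.ne

open Classical in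
theorem Fin.sum_injective_eq_sum_strictMono_sum_perm {n : ℕ} {α M : Type*} [Fintype α]
    [LinearOrder α] [AddCommMonoid M] (F : (Fin n → α) → M) :
    ∑ f : Fin n → α with Function.Injective f, F f
      = ∑ g : Fin n → α with StrictMono g, ∑ σ : Perm (Fin n), F (g ∘ σ) := by
  rw [← sum_product']
  refine sum_nbij' (fun f => (f ∘ Tuple.sort f, (Tuple.sort f)⁻¹)) (fun p => p.1 ∘ p.2)
    ?_ ?_ ?_ ?_ ?_
  · intro f hf
    simp only [mem_filter_univ, mem_product, mem_univ, and_true] at hf ⊢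
    exact (Tuple.monotone_sort f).strictMono_of_injective (hf.comp (Tuple.sort f).injective)
  · rintro ⟨g, σ⟩ hg
    simp only [mem_filter_univ, mem_product, mem_univ, and_true] at hg ⊢
    exact hg.injective.comp σ.injective
  · intro f _
    ext i
    simp
  · rintro ⟨g, σ⟩ hg
    replace hg : StrictMono g := by simpa using hg
    rw [Tuple.sort_comp_perm_of_strictMono hg, inv_inv]
    simp [Function.comp_def]
  · intro f _
    simp [Function.comp_def]

namespace Matrix

variable {n : ℕ} {m R : Type*} [Fintype m] [CommRing R]

theorem det_mul_eq_sum_prod_mul_det_submatrix (B : Matrix (Fin n) m R)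
    (C : Matrix m (Fin n) R) :
    det (B * C) = ∑ f : Fin n → m, (∏ i, C (f i) i) * det (B.submatrix id f) := by
  simp only [det_apply', mul_apply, prod_univ_sum, mul_sum, Fintype.piFinset_univ]
  rw [sum_comm]
  refine sum_congr rfl fun f _ => sum_congr rfl fun σ _ => ?_
  simp only [submatrix_apply, id_eq, prod_mul_distrib]
  ring

open Classical in
theorem det_mul_cauchy_binet [LinearOrder m] (B : Matrix (Fin n) m R)
    (C : Matrix m (Fin n) R) :
    det (B * C) = ∑ g : Fin n → m with StrictMono g,
      det (B.submatrix id g) * det (C.submatrix g id) := by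
  have hvanish : ∀ f : Fin n → m, ¬ Function.Injective f → det (B.submatrix id f) = 0 := by
    intro f hf
    obtain ⟨i, j, hfij, hij⟩ := Function.not_injective_iff.1 hf
    exact det_zero_of_column_eq hij fun k => by simp [hfij]
  rw [det_mul_eq_sum_prod_mul_det_submatrix, ← sum_filter_of_ne fun f _ h =>
      not_not.1 fun hf => h (by rw [hvanish f hf, mul_zero]),
    Fin.sum_injective_eq_sum_strictMono_sum_perm]
  refine sum_congr rfl fun g _ => ?_
  have hperm : ∀ σ : Perm (Fin n),
      B.submatrix id (g ∘ σ) = (B.submatrix id g).submatrix id σ := fun _ => rfl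
  simp only [hperm, det_permute', det_apply' (C.submatrix g id), submatrix_apply, id_eq,
    Function.comp_apply, mul_sum]
  refine sum_congr rfl fun σ _ => ?_
  ring

open Classical in
theorem det_mul_diagonal_mul_transpose [LinearOrder m] (A : Matrix (Fin n) m R)
    (w : m → R) :
    det (A * diagonal w * Aᵀ) = ∑ g : Fin n → m with StrictMono g,
      det (A.submatrix id g) ^ 2 * ∏ i, w (g i) := by
  rw [det_mul_cauchy_binet]
  refine sum_congr rfl fun g _ => ?_
  have hcols : (A * diagonal w).submatrix id g = A.submatrix id g * diagonal (w ∘ g) := by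
    ext; simp [mul_diagonal]
  rw [hcols, ← transpose_submatrix, det_mul, det_diagonal, det_transpose]
  simp only [Function.comp_apply]
  ring

end Matrix

theorem Real.sum_rpow_mul_rpow_le_of_add_eq_one {ι : Type*} (s : Finset ι) {f g : ι → ℝ}
    (hf : ∀ i ∈ s, 0 ≤ f i) (hg : ∀ i ∈ s, 0 ≤ g i) {a b : ℝ} (ha : 0 < a) (hb : 0 < b)
    (hab : a + b = 1) :
    ∑ i ∈ s, f i ^ a * g i ^ b ≤ (∑ i ∈ s, f i) ^ a * (∑ i ∈ s, g i) ^ b := by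
  have hpq : a⁻¹.HolderConjugate b⁻¹ := by
    rw [Real.holderConjugate_iff, inv_inv, inv_inv]
    exact ⟨one_lt_inv₀ ha |>.2 (by linarith), hab⟩
  have hroot : ∀ {c : ℝ}, 0 < c → ∀ {h : ι → ℝ}, (∀ i ∈ s, 0 ≤ h i) →
      ∑ i ∈ s, (h i ^ c) ^ c⁻¹ = ∑ i ∈ s, h i := fun hc h hh =>
    sum_congr rfl fun i hi => by rw [← rpow_mul (hh i hi), mul_inv_cancel₀ hc.ne', rpow_one]
  have holder := inner_le_Lp_mul_Lq_of_nonneg s hpq (fun i hi => rpow_nonneg (hf i hi) a)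
    (fun i hi => rpow_nonneg (hg i hi) b)
  rwa [hroot ha hf, hroot hb hg, one_div, one_div, inv_inv, inv_inv] at holder

theorem convexOn_log_sum_mul_exp {ι E : Type*} [AddCommGroup E] [Module ℝ E] (s : Finset ι)
    {c : ι → ℝ} (hc : ∀ i ∈ s, 0 ≤ c i) (ℓ : ι → E →ₗ[ℝ] ℝ) :
    ConvexOn ℝ Set.univ fun x => log (∑ i ∈ s, c i * exp (ℓ i x)) := by
  by_cases hzero : ∀ i ∈ s, c i = 0
  · have : (fun x => log (∑ i ∈ s, c i * exp (ℓ i x))) = fun _ => 0 := by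
      ext x
      rw [sum_eq_zero fun i hi => by rw [hzero i hi, zero_mul], log_zero]
    exact this ▸ convexOn_const 0 convex_univ
  obtain ⟨i₀, hi₀, hci₀⟩ := not_forall₂.1 hzero
  set F := fun x => ∑ i ∈ s, c i * exp (ℓ i x)
  have hF : ∀ x, 0 < F x := fun x =>
    sum_pos' (fun i hi => mul_nonneg (hc i hi) (exp_pos _).le)
      ⟨i₀, hi₀, mul_pos ((hc i₀ hi₀).lt_of_ne' hci₀) (exp_pos _)⟩
  refine ⟨convex_univ, fun x _ y _ a b ha hb hab => ?_⟩
  rcases ha.eq_or_lt with rfl | ha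
  · simp [show b = 1 by linarith]
  rcases hb.eq_or_lt with rfl | hb
  · simp [show a = 1 by linarith]
  have hmix : F (a • x + b • y)
      = ∑ i ∈ s, (c i * exp (ℓ i x)) ^ a * (c i * exp (ℓ i y)) ^ b := by
    refine sum_congr rfl fun i hi => ?_
    rw [mul_rpow (hc i hi) (exp_pos _).le, mul_rpow (hc i hi) (exp_pos _).le, ← exp_mul,
      ← exp_mul, mul_mul_mul_comm, ← rpow_add' (hc i hi) (by rw [hab]; exact one_ne_zero), hab,
      rpow_one, ← exp_add, map_add, map_smul, map_smul, smul_eq_mul, smul_eq_mul,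
      mul_comm a, mul_comm b]
  calc log (F (a • x + b • y))
      ≤ log (F x ^ a * F y ^ b) :=
        log_le_log (hF _) <| hmix ▸ Real.sum_rpow_mul_rpow_le_of_add_eq_one s
          (fun i hi => mul_nonneg (hc i hi) (exp_pos _).le)
          (fun i hi => mul_nonneg (hc i hi) (exp_pos _).le) ha hb hab
    _ = a • log (F x) + b • log (F y) := by
        rw [log_mul (rpow_pos_of_pos (hF x) a).ne' (rpow_pos_of_pos (hF y) b).ne',
          log_rpow (hF x), log_rpow (hF y), smul_eq_mul, smul_eq_mul]

theorem phi_A_convex_general {n m : ℕ}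
    (A : Matrix (Fin n) (Fin m) ℝ) :
    ConvexOn ℝ Set.univ (fun t : Fin m → ℝ =>
      Real.log ((A * Matrix.diagonal (fun j => Real.exp (t j)) * Aᵀ).det)) := by
  classical
  let ℓ (g : Fin n → Fin m) : (Fin m → ℝ) →ₗ[ℝ] ℝ := ∑ i, LinearMap.proj (g i)
  have hsum : ∀ t : Fin m → ℝ, (A * diagonal (fun j => exp (t j)) * Aᵀ).det
      = ∑ g : Fin n → Fin m with StrictMono g, (A.submatrix id g).det ^ 2 * exp (ℓ g t) := by
    intro t
    simp [ℓ, det_mul_diagonal_mul_transpose, exp_sum]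
  exact (convexOn_log_sum_mul_exp _ (fun g _ => sq_nonneg (A.submatrix id g).det) _).congr
    fun t _ => by rw [hsum]

/-- Convexity of `Φ_A(t) = ln det (A e^T Aᵗ)` for an `n × m` matrix `A` of full row
rank, where `T = diag(t_1, …, t_m)`. -/
theorem phi_A_convex {n m : ℕ}
    (A : Matrix (Fin n) (Fin m) ℝ) (hA : A.rank = n) :
    ConvexOn ℝ Set.univ (fun t : Fin m → ℝ =>
      Real.log ((A * Matrix.diagonal (fun j => Real.exp (t j)) * Aᵀ).det)) :=
  phi_A_convex_general A
end
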